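/- arXiv:1906.04936 — 2 statements merged into one kernel-verified Lean document; each statement's English description precedes it below -/
import Mathlib

section
/- For any bounded random variable X with values in [m, M], Var(X) ≤ (M − E[X])(E[X] − m) (the Bhatia–Davis inequality), with equality if and only if X is supported on {m, M}. -/
/-!
On `[a, b]` the function `(b - x) * (x - a)` is nonnegative, and its expectation under the law of
`X` is `(b - 𝔼 X) * (𝔼 X - a) - Var X`. Hence the inequality, with equality exactly when
`(b - X) * (X - a)` vanishes almost surely, i.e. when `X` only takes the values `a` and `b`.
-/

open MeasureTheory ProbabilityTheory

namespace ProbabilityTheory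

variable {Ω : Type*} {mΩ : MeasurableSpace Ω} {μ : Measure Ω} [IsProbabilityMeasure μ]
  {X : Ω → ℝ}

lemma integral_sub_mul_sub_eq_sub_variance (hX : MemLp X 2 μ) (a b : ℝ) :
    ∫ ω, (b - X ω) * (X ω - a) ∂μ = (b - μ[X]) * (μ[X] - a) - Var[X; μ] := by
  have hX₁ : Integrable X μ := hX.integrable one_le_two
  have hX₂ : Integrable (fun ω ↦ X ω ^ 2) μ := hX.integrable_sq
  calc ∫ ω, (b - X ω) * (X ω - a) ∂μ
      = ∫ ω, ((a + b) * X ω - X ω ^ 2) - a * b ∂μ := by congr with ω; ring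
    _ = (a + b) * μ[X] - μ[X ^ 2] - a * b := by
      rw [integral_sub (by fun_prop) (integrable_const _),
        integral_sub (hX₁.const_mul _) hX₂, integral_const_mul]
      simp
    _ = (b - μ[X]) * (μ[X] - a) - Var[X; μ] := by rw [variance_eq_sub hX]; ring

lemma variance_eq_sub_mul_sub_iff {a b : ℝ} (h : ∀ᵐ ω ∂μ, X ω ∈ Set.Icc a b)
    (hX : AEMeasurable X μ) :
    Var[X; μ] = (b - μ[X]) * (μ[X] - a) ↔ ∀ᵐ ω ∂μ, X ω = a ∨ X ω = b := by
  have hX₂ : MemLp X 2 μ := memLp_of_bounded h hX.aestronglyMeasurable 2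
  have hnonneg : 0 ≤ᵐ[μ] fun ω ↦ (b - X ω) * (X ω - a) := by
    filter_upwards [h] with ω hω
    exact mul_nonneg (sub_nonneg.2 hω.2) (sub_nonneg.2 hω.1)
  have hint : Integrable (fun ω ↦ (b - X ω) * (X ω - a)) μ :=
    ((memLp_const b).sub hX₂).integrable_mul (hX₂.sub (memLp_const a))
  rw [eq_comm, ← sub_eq_zero, ← integral_sub_mul_sub_eq_sub_variance hX₂,
    integral_eq_zero_iff_of_nonneg_ae hnonneg hint]
  refine Filter.eventually_congr (ae_of_all _ fun ω ↦ ?_)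
  simp only [Pi.zero_apply, mul_eq_zero, sub_eq_zero]
  tauto

end ProbabilityTheory

/-- The Bhatia–Davis inequality, with equality iff the random variable is
supported on the endpoints. -/
theorem bhatia_davis {Ω : Type*} [MeasureSpace Ω]
    [IsProbabilityMeasure (ℙ : Measure Ω)]
    (X : Ω → ℝ) (hX : Measurable X) (m M : ℝ)
    (hbdd : ∀ᵐ ω ∂ℙ, X ω ∈ Set.Icc m M) :
    variance X ℙ ≤ (M - ∫ ω, X ω ∂ℙ) * ((∫ ω, X ω ∂ℙ) - m) ∧
    (variance X ℙ = (M - ∫ ω, X ω ∂ℙ) * ((∫ ω, X ω ∂ℙ) - m) ↔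
      ∀ᵐ ω ∂ℙ, X ω = m ∨ X ω = M) :=
  ⟨variance_le_sub_mul_sub hbdd hX.aemeasurable, variance_eq_sub_mul_sub_iff hbdd hX.aemeasurable⟩
end

section
/- The directional Relative Hausdorff distance is not symmetric and the Relative Hausdorff distance RH(F,G) = max(ℛℋ(F,G), ℛℋ(G,F)) does not satisfy the triangle inequality: there exist graphs (equivalently, nonincreasing step functions serving as ccdhs) F, G, H with RH(F,H) > RH(F,G) + RH(G,H). -/
/-- `RHdirOK f g Δf Δg ε` : the directional RH condition with tolerance `ε`
between ccdhs `f` (max degree `Δf`) and `g` (max degree `Δg`). -/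
def RHdirOK (f g : ℕ → ℕ) (Δf Δg : ℕ) (ε : ℝ) : Prop :=
  ∀ d ∈ Finset.Icc 1 Δf, ∃ d' ∈ Finset.Icc 1 (Δg + 1),
    |(d : ℝ) - (d' : ℝ)| ≤ ε * d ∧ |(f d : ℝ) - (g d' : ℝ)| ≤ ε * f d

/-- The directional Relative Hausdorff distance. -/
noncomputable def RHdir (f g : ℕ → ℕ) (Δf Δg : ℕ) : ℝ :=
  sInf {ε : ℝ | 0 ≤ ε ∧ RHdirOK f g Δf Δg ε}

/-- The Relative Hausdorff distance. -/
noncomputable def RHdist (f g : ℕ → ℕ) (Δf Δg : ℕ) : ℝ :=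
  max (RHdir f g Δf Δg) (RHdir g f Δg Δf)

/-- `f` is a ccdh with maximum degree `Δ`: a nonincreasing sequence, positive
at `Δ` and vanishing beyond `Δ`. -/
def IsCcdh (f : ℕ → ℕ) (Δ : ℕ) : Prop :=
  (∀ k, f (k + 1) ≤ f k) ∧ (∀ k, Δ < k → f k = 0) ∧ 0 < f Δ

/-! Both failures come from measuring the error in `F(d)` relative to `F(d)`, i.e. to the
source. Take the ccdhs of `K₂`, of the perfect matching `M₆` on 6 vertices, and of the cube `Q₃`.
Degree 1 of `K₂` (count 2) is matched in `M₆` either by count 6 (relative error 2) or by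
degree 2 (error 1), while from `M₆` the count 6 against 2 is off by only `2/3`. From `K₂` to `Q₃`
each degree `d' ≤ 3` has count 8 (error 3) and `d' = 4` is off by 3 in degree, yet the two legs
through `M₆` cost 1 and at most `2/3`. -/

def regularCcdh (n Δ : ℕ) : ℕ → ℕ := fun k => if k ≤ Δ then n else 0

lemma isCcdh_regularCcdh {n : ℕ} (hn : 0 < n) (Δ : ℕ) : IsCcdh (regularCcdh n Δ) Δ := by
  refine ⟨fun k => ?_, fun k hk => ?_, ?_⟩ <;> simp only [regularCcdh] <;> split_ifs <;> omega

section

variable {f g : ℕ → ℕ} {Δf Δg : ℕ}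

lemma rhdir_le {ε : ℝ} (hε : 0 ≤ ε) (h : RHdirOK f g Δf Δg ε) : RHdir f g Δf Δg ≤ ε :=
  csInf_le ⟨0, fun _ hx => hx.1⟩ ⟨hε, h⟩

lemma rhdir_eq {c : ℝ} (hc : 0 ≤ c) (h : RHdirOK f g Δf Δg c)
    (hmin : ∀ ε, RHdirOK f g Δf Δg ε → c ≤ ε) : RHdir f g Δf Δg = c :=
  IsLeast.csInf_eq ⟨⟨hc, h⟩, fun ε hε => hmin ε hε.2⟩

lemma rhdirOK_one_iff {ε : ℝ} :
    RHdirOK f g 1 Δg ε ↔ ∃ d' ∈ Finset.Icc 1 (Δg + 1),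
      |1 - (d' : ℝ)| ≤ ε ∧ |(f 1 : ℝ) - g d'| ≤ ε * f 1 := by
  simp [RHdirOK]

end

local notation "K₂" => regularCcdh 2 1
local notation "M₆" => regularCcdh 6 1
local notation "Q₃" => regularCcdh 8 3

lemma rhdir_K₂_M₆ : RHdir K₂ M₆ 1 1 = 1 := by
  refine rhdir_eq zero_le_one (rhdirOK_one_iff.2 ⟨2, by simp, by norm_num [regularCcdh]⟩)
    fun ε h => ?_
  obtain ⟨d', hd', h1, h2⟩ := rhdirOK_one_iff.1 h
  obtain ⟨hd'₁, hd'₂⟩ := Finset.mem_Icc.1 hd'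
  norm_num at hd'₂
  interval_cases d' <;> norm_num [regularCcdh] at h1 h2 <;> linarith

lemma rhdir_M₆_K₂ : RHdir M₆ K₂ 1 1 = 2 / 3 := by
  refine rhdir_eq (by norm_num) (rhdirOK_one_iff.2 ⟨1, by simp, by norm_num [regularCcdh]⟩)
    fun ε h => ?_
  obtain ⟨d', hd', h1, h2⟩ := rhdirOK_one_iff.1 h
  obtain ⟨hd'₁, hd'₂⟩ := Finset.mem_Icc.1 hd'
  norm_num at hd'₂
  interval_cases d' <;> norm_num [regularCcdh] at h1 h2 <;> linarith

lemma rhdir_K₂_Q₃ : RHdir K₂ Q₃ 1 3 = 3 := by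
  refine rhdir_eq (by norm_num) (rhdirOK_one_iff.2 ⟨1, by simp, by norm_num [regularCcdh]⟩)
    fun ε h => ?_
  obtain ⟨d', hd', h1, h2⟩ := rhdirOK_one_iff.1 h
  obtain ⟨hd'₁, hd'₂⟩ := Finset.mem_Icc.1 hd'
  norm_num at hd'₂
  interval_cases d' <;> norm_num [regularCcdh] at h1 h2 <;> linarith

lemma rhdir_M₆_Q₃_le : RHdir M₆ Q₃ 1 3 ≤ 1 / 3 :=
  rhdir_le (by norm_num) (rhdirOK_one_iff.2 ⟨1, by simp, by norm_num [regularCcdh]⟩)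

lemma rhdir_Q₃_M₆_le : RHdir Q₃ M₆ 3 1 ≤ 2 / 3 :=
  rhdir_le (by norm_num) fun d hd => ⟨1, by simp, by
    obtain ⟨hd₁, hd₂⟩ := Finset.mem_Icc.1 hd
    interval_cases d <;> norm_num [regularCcdh]⟩

/-- The directional RH distance is not symmetric, and the RH distance fails
the triangle inequality. -/
theorem rh_not_symmetric_and_no_triangle :
    (∃ (f g : ℕ → ℕ) (Δf Δg : ℕ), IsCcdh f Δf ∧ IsCcdh g Δg ∧
      RHdir f g Δf Δg ≠ RHdir g f Δg Δf) ∧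
    (∃ (f g h : ℕ → ℕ) (Δf Δg Δh : ℕ),
      IsCcdh f Δf ∧ IsCcdh g Δg ∧ IsCcdh h Δh ∧
      RHdist f h Δf Δh > RHdist f g Δf Δg + RHdist g h Δg Δh) := by
  have hK₂ : IsCcdh K₂ 1 := isCcdh_regularCcdh (by norm_num) 1
  have hM₆ : IsCcdh M₆ 1 := isCcdh_regularCcdh (by norm_num) 1
  have hQ₃ : IsCcdh Q₃ 3 := isCcdh_regularCcdh (by norm_num) 3
  refine ⟨⟨_, _, _, _, hK₂, hM₆, ?_⟩, ⟨_, _, _, _, _, _, hK₂, hM₆, hQ₃, ?_⟩⟩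
  · rw [rhdir_K₂_M₆, rhdir_M₆_K₂]
    norm_num
  · have hK₂M₆ : RHdist K₂ M₆ 1 1 = 1 := by
      rw [RHdist, rhdir_K₂_M₆, rhdir_M₆_K₂]
      norm_num
    have hM₆Q₃ : RHdist M₆ Q₃ 1 3 ≤ 2 / 3 :=
      max_le (rhdir_M₆_Q₃_le.trans (by norm_num)) rhdir_Q₃_M₆_le
    have hK₂Q₃ : 3 ≤ RHdist K₂ Q₃ 1 3 := rhdir_K₂_Q₃.ge.trans (le_max_left _ _)
    linarith
end
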